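/- Let t ∈ FEnd(Σ*) and suppose the orbit signalizer graph Φ(t) has finitely many vertices. Then the monogenic semigroup {t^n : n ≥ 1} is infinite if and only if Φ(t) contains a simple cycle κ (a closed walk with no repeated vertices) with i⁻(κ) > 0 or p(κ) > 1. -/

import Mathlib

/-!
A walk in `Φ(t)` from `(id, t)` that reads the word `u` and has costs `i⁺ = I`, `p = P` ends at
`(t^I|_u, (t^P)|_{t^I·u})`, and `t^{I+P}·u = t^I·u`.

If `t^{a+c} = t^a` with `c > 0`, then along every walk a step with nonzero index occurs only while
`I < a`, and the periods multiply to a divisor of `c`; going round a bad cycle often enough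
breaks one of these bounds. Conversely, if no simple cycle is bad, no closed walk contains a bad
step, so the bad steps of a walk from `(id, t)` leave from pairwise distinct vertices. As `Φ(t)`
is finite, `i⁺` and `p` are then bounded over all walks, and since every word is read by such a
walk, `t^{B + C!} = t^B` for suitable `B`, `C`.
-/

open Filter Topology

namespace AutHier

variable {A : Type*}

/-- The section (state) `f|_u` of a transformation `f : Σ* → Σ*` at the word `u`. -/
def sec (f : List A → List A) (u : List A) : List A → List A :=
  fun v => (f (u ++ v)).drop u.length

/-- `f` is an endomorphism of `Σ*`: it preserves lengths and prefixes. -/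
def IsEnd (f : List A → List A) : Prop :=
  (∀ u, (f u).length = u.length) ∧ ∀ u v, f u <+: f (u ++ v)

/-- `f` is a finite-state endomorphism of `Σ*` (an element of `FEnd(Σ*)`). -/
def IsFEnd (f : List A → List A) : Prop :=
  IsEnd f ∧ {g | ∃ u, g = sec f u}.Finite

/-- The activity `α_f(n)` of a transformation `f`:
the number of words `v` of length `n` which are images of some word `u`
of length `n` whose section `f|_u` is nontrivial. -/
noncomputable def activity (f : List A → List A) (n : ℕ) : ℕ :=
  Set.ncard {v : List A | v.length = n ∧
    ∃ u : List A, u.length = n ∧ sec f u ≠ id ∧ f u = v}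

/-- The class `SP(d)` of finite-state endomorphisms of
polynomial activity of degree at most `d`. -/
def SP (A : Type*) (d : ℤ) : Set (List A → List A) :=
  {t | IsFEnd t ∧
    Tendsto (fun n : ℕ => (activity t n : ℝ) / (n : ℝ) ^ (d + 1)) atTop (𝓝 0)}

/-- The class `SE(l)` of finite-state endomorphisms of
exponential activity of growth rate at most `l`. -/
def SE (A : Type*) (l : ℝ) : Set (List A → List A) :=
  {t | IsFEnd t ∧
    limsup (fun n : ℕ => Real.log (activity t n) / (n : ℝ)) atTop ≤ l}

/-- The stateset `Q'(t)` of the pruned automaton: all sections of `t` except `id`. -/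
def Qp (t : List A → List A) : Set (List A → List A) :=
  {g | ∃ u, g = sec t u} \ {id}

/-- One-letter transition of the determinized pruned output automaton of `t`. -/
def delta (t : List A → List A) (S : Set (List A → List A)) (y : A) :
    Set (List A → List A) :=
  {s' | s' ∈ Qp t ∧ ∃ s ∈ S, ∃ x : A, s [x] = [y] ∧ sec s [x] = s'}

/-- Extended transition function `δ*` of the determinized pruned output automaton. -/
def deltaStar (t : List A → List A) (S : Set (List A → List A)) (v : List A) :
    Set (List A → List A) :=
  v.foldl (delta t) S

/-- There is a chain of `k` cycles in the determinized pruned output automaton of `t`. -/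
def ChainOfCycles (t : List A → List A) (k : ℕ) : Prop :=
  ∃ (S : Fin k → Set (List A → List A)) (c : Fin k → List A),
    (∀ i, S i ≠ ∅) ∧ (∀ i, c i ≠ []) ∧
    (∀ h : 0 < k, ∃ v, deltaStar t {t} v = S ⟨0, h⟩) ∧
    (∀ i, deltaStar t (S i) (c i) = S i) ∧
    (∀ (i : Fin k) (h : (i : ℕ) + 1 < k),
      (∃ v, deltaStar t (S i) v = S ⟨(i : ℕ) + 1, h⟩) ∧
      ¬ (∃ v, deltaStar t (S ⟨(i : ℕ) + 1, h⟩) v = S i))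

/-- The edge relation of the orbit signalizer graph `Φ`: from the vertex `v = (s,t)`,
reading the letter `x`, with label `(x; m, ℓ)` where `m, ℓ` are the minimal integers
(`ℓ ≥ 1`) with `(s t^{m+ℓ})·x = (s t^m)·x`, the edge goes to
`v' = (r|_x, (t^ℓ)|_{r·x})` where `r = s t^m`. -/
def OSStep (v : (List A → List A) × (List A → List A)) (x : A) (m ℓ : ℕ)
    (v' : (List A → List A) × (List A → List A)) : Prop :=
  1 ≤ ℓ ∧ v.2^[m + ℓ] (v.1 [x]) = v.2^[m] (v.1 [x]) ∧
  (∀ m' ℓ' : ℕ, 1 ≤ ℓ' → v.2^[m' + ℓ'] (v.1 [x]) = v.2^[m'] (v.1 [x]) → m ≤ m') ∧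
  (∀ ℓ' : ℕ, 1 ≤ ℓ' → v.2^[m + ℓ'] (v.1 [x]) = v.2^[m] (v.1 [x]) → ℓ ≤ ℓ') ∧
  v' = (sec (v.2^[m] ∘ v.1) [x], sec (v.2^[ℓ]) ((v.2^[m] ∘ v.1) [x]))

/-- A walk of length `n` in the orbit signalizer graph `Φ`. -/
structure OSPath (A : Type*) (n : ℕ) where
  vert : Fin (n + 1) → (List A → List A) × (List A → List A)
  lett : Fin n → A
  idx : Fin n → ℕ
  per : Fin n → ℕ
  step : ∀ k : Fin n, OSStep (vert k.castSucc) (lett k) (idx k) (per k) (vert k.succ)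

/-- The inf-index-cost `i⁻(π)` of a walk with indices `idx` and periods `per`. -/
def iminusCost {n : ℕ} (idx per : Fin n → ℕ) : ℕ :=
  ∑ k : Fin n, if idx k = 0 then 0
    else (idx k - 1) * (∏ j ∈ Finset.univ.filter (· < k), per j) + 1

/-- The sup-index-cost `i⁺(π)` of a walk with indices `idx` and periods `per`. -/
def iplusCost {n : ℕ} (idx per : Fin n → ℕ) : ℕ :=
  ∑ k : Fin n, (∏ j ∈ Finset.univ.filter (· < k), per j) * idx k

/-- The period-cost `p(π)` of a walk with periods `per`. -/
def pCost {n : ℕ} (per : Fin n → ℕ) : ℕ :=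
  ∏ k : Fin n, per k

/-- The walk `w` starts at the vertex `(id, t)`, i.e. it is a walk in `Φ(t)` from its root. -/
def IsWalkFrom {n : ℕ} (t : List A → List A) (w : OSPath A n) : Prop :=
  w.vert 0 = (id, t)

/-- The vertex `v` is accessible from `(id, t)` in `Φ`, i.e. `v` is a vertex of `Φ(t)`. -/
def OSReach (t : List A → List A) (v : (List A → List A) × (List A → List A)) : Prop :=
  ∃ n : ℕ, ∃ w : OSPath A n, IsWalkFrom t w ∧ w.vert (Fin.last n) = v

/-- The set of inf-index-costs of walks in `Φ(t)` from `(id, t)`. -/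
def IminusCosts (t : List A → List A) : Set ℕ :=
  {c | ∃ n : ℕ, ∃ w : OSPath A n, IsWalkFrom t w ∧ c = iminusCost w.idx w.per}

/-- The set of sup-index-costs of walks in `Φ(t)` from `(id, t)`. -/
def IplusCosts (t : List A → List A) : Set ℕ :=
  {c | ∃ n : ℕ, ∃ w : OSPath A n, IsWalkFrom t w ∧ c = iplusCost w.idx w.per}

/-- The set of period-costs of walks in `Φ(t)` from `(id, t)`. -/
def PCosts (t : List A → List A) : Set ℕ :=
  {c | ∃ n : ℕ, ∃ w : OSPath A n, IsWalkFrom t w ∧ c = pCost w.per}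

/-- `w` is a simple cycle of `Φ(t)`: a closed walk of positive length, lying in `Φ(t)`,
with no repeated vertices. -/
def IsSimpleCycle {n : ℕ} (t : List A → List A) (w : OSPath A n) : Prop :=
  1 ≤ n ∧ OSReach t (w.vert 0) ∧ w.vert (Fin.last n) = w.vert 0 ∧
  ∀ j k : Fin (n + 1), (j : ℕ) < n → (k : ℕ) < n → w.vert j = w.vert k → j = k



section Orbit

variable {α : Type*} {g : α → α} {p : α}

theorem isPeriodicPt_iterate_iff {a c : ℕ} :
    Function.IsPeriodicPt g c (g^[a] p) ↔ g^[a + c] p = g^[a] p := by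
  rw [Function.IsPeriodicPt, Function.IsFixedPt, ← Function.iterate_add_apply, add_comm]

theorem iterate_add_eq_of_le_of_dvd {a c N C : ℕ} (h : g^[a + c] p = g^[a] p) (hN : a ≤ N)
    (hC : c ∣ C) : g^[N + C] p = g^[N] p := by
  rw [← isPeriodicPt_iterate_iff] at h ⊢
  obtain ⟨d, rfl⟩ := Nat.exists_eq_add_of_le hN
  rw [add_comm, Function.iterate_add_apply]
  exact (h.apply_iterate d).trans_dvd hC

theorem dvd_of_iterate_add_eq {m ℓ N q : ℕ} (hℓ : 0 < ℓ) (hper : g^[m + ℓ] p = g^[m] p)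
    (hmin : ∀ ℓ', 0 < ℓ' → g^[m + ℓ'] p = g^[m] p → ℓ ≤ ℓ') (hN : m ≤ N)
    (h : g^[N + q] p = g^[N] p) : ℓ ∣ q := by
  rw [← isPeriodicPt_iterate_iff] at hper h
  have hmem := Function.mk_mem_periodicPts hℓ hper
  have hℓ_eq : Function.minimalPeriod g (g^[m] p) = ℓ :=
    le_antisymm (hper.minimalPeriod_le hℓ) <|
      hmin _ (Function.minimalPeriod_pos_of_mem_periodicPts hmem)
        (isPeriodicPt_iterate_iff.mp (Function.isPeriodicPt_minimalPeriod g _))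
  obtain ⟨d, rfl⟩ := Nat.exists_eq_add_of_le hN
  rw [add_comm, Function.iterate_add_apply] at h
  rw [← hℓ_eq, ← Function.minimalPeriod_apply_iterate hmem d]
  exact h.minimalPeriod_dvd

theorem exists_minimal_iterate_add_eq (h : ∃ m ℓ, 0 < ℓ ∧ g^[m + ℓ] p = g^[m] p) :
    ∃ m ℓ, 0 < ℓ ∧ g^[m + ℓ] p = g^[m] p ∧
      (∀ m' ℓ', 0 < ℓ' → g^[m' + ℓ'] p = g^[m'] p → m ≤ m') ∧
      ∀ ℓ', 0 < ℓ' → g^[m + ℓ'] p = g^[m] p → ℓ ≤ ℓ' := by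
  classical
  have hℓ := Nat.find_spec h
  refine ⟨Nat.find h, Nat.find hℓ, (Nat.find_spec hℓ).1, (Nat.find_spec hℓ).2,
    fun m' ℓ' hℓ' h' => Nat.find_min' h ⟨ℓ', hℓ', h'⟩,
    fun ℓ' hℓ' h' => Nat.find_min' hℓ ⟨hℓ', h'⟩⟩

theorem exists_iterate_add_eq_of_mapsTo {s : Set α} (hs : s.Finite) (hg : Set.MapsTo g s s)
    (hp : p ∈ s) : ∃ a c, 0 < c ∧ g^[a + c] p = g^[a] p := by
  obtain ⟨i, j, hij, h⟩ := hs.exists_lt_map_eq_of_forall_mem (f := fun k => g^[k] p)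
    fun k => hg.iterate k hp
  exact ⟨i, j - i, by omega, by rw [Nat.add_sub_cancel' hij.le]; exact h.symm⟩

theorem finite_iterates_of_iterate_add_eq {a c : ℕ} (hc : 0 < c) (h : g^[a + c] = g^[a]) :
    {f : α → α | ∃ n, 1 ≤ n ∧ f = g^[n]}.Finite := by
  refine ((Finset.range (a + c)).finite_toSet.image fun k => g^[k]).subset ?_
  rintro _ ⟨n, -, rfl⟩
  rcases lt_or_ge n a with hn | hn
  · exact ⟨n, Finset.mem_coe.mpr (Finset.mem_range.mpr (by omega)), rfl⟩
  refine ⟨a + (n - a) % c, by simp [Nat.mod_lt _ hc], funext fun x => ?_⟩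
  have := iterate_add_eq_of_le_of_dvd (congrFun h x) (Nat.le_add_right a ((n - a) % c))
    (Nat.dvd_mul_right c ((n - a) / c))
  rw [add_assoc, Nat.mod_add_div, Nat.add_sub_cancel' hn] at this
  exact this.symm

theorem exists_iterate_add_eq_of_finite (h : {f : α → α | ∃ n, 1 ≤ n ∧ f = g^[n]}.Finite) :
    ∃ a c, 0 < c ∧ g^[a + c] = g^[a] := by
  obtain ⟨i, j, hij, hg⟩ := h.exists_lt_map_eq_of_forall_mem (f := fun k => g^[k + 1])
    fun k => by exact ⟨k + 1, by omega, rfl⟩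
  exact ⟨i + 1, j - i, by omega, by rw [show i + 1 + (j - i) = j + 1 by omega]; exact hg.symm⟩

end Orbit

section Endomorphism

variable {f g : List A → List A}

theorem IsEnd.comp (hf : IsEnd f) (hg : IsEnd g) : IsEnd (g ∘ f) := by
  refine ⟨fun u => by simp [hg.1, hf.1], fun u v => ?_⟩
  obtain ⟨s, hs⟩ := hf.2 u v
  simpa only [Function.comp_apply, ← hs] using hg.2 (f u) s

theorem IsEnd.iterate (hf : IsEnd f) : ∀ k, IsEnd f^[k]
  | 0 => ⟨fun _ => rfl, fun u v => List.prefix_append u v⟩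
  | k + 1 => hf.comp (hf.iterate k)

theorem IsEnd.append_eq (hf : IsEnd f) (u w : List A) : f (u ++ w) = f u ++ sec f u w := by
  obtain ⟨s, hs⟩ := hf.2 u w
  simp [sec, ← hs, hf.1]

theorem sec_append (f : List A → List A) (u w : List A) : sec f (u ++ w) = sec (sec f u) w := by
  funext z
  simp [sec, List.drop_drop]

theorem IsEnd.sec_comp (hf : IsEnd f) (g : List A → List A) (u : List A) :
    sec (g ∘ f) u = sec g (f u) ∘ sec f u := by
  funext z
  show (g (f (u ++ z))).drop u.length = (g (f u ++ sec f u z)).drop (f u).length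
  rw [← hf.append_eq, hf.1]

theorem IsEnd.sec_iterate_of_isFixedPt {p : List A} (hf : IsEnd f) (hp : f p = p) :
    ∀ j, sec f^[j] p = (sec f p)^[j]
  | 0 => funext fun z => by simp [sec]
  | j + 1 => by
    rw [Function.iterate_succ, hf.sec_comp, hp, hf.sec_iterate_of_isFixedPt hp j,
      Function.iterate_succ]

theorem IsEnd.exists_iterate_add_eq [Finite A] (hf : IsEnd f) (w : List A) :
    ∃ a c, 0 < c ∧ f^[a + c] w = f^[a] w :=
  exists_iterate_add_eq_of_mapsTo (List.finite_length_eq A w.length)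
    (fun u hu => (hf.1 u).trans hu) rfl

end Endomorphism

abbrev Vertex (A : Type*) : Type _ := (List A → List A) × (List A → List A)

/-- The shape of every vertex of `Φ(t)`: `u` is the word read along a walk from `(id, t)`,
and `I`, `P` are the costs `i⁺`, `p` of that walk. -/
structure OrbitVertex (t : List A → List A) (u : List A) (I P : ℕ) (v : Vertex A) : Prop where
  fst_eq : v.1 = sec t^[I] u
  snd_eq : v.2 = sec t^[P] (t^[I] u)
  iterate_add_eq : t^[I + P] u = t^[I] u
  pos : 0 < P

namespace OrbitVertex

variable {t : List A → List A} {u : List A} {I P : ℕ} {v v' : Vertex A} {x : A} {m ℓ : ℕ}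

theorem root (ht : IsEnd t) : OrbitVertex t [] 0 1 (id, t) where
  fst_eq := funext fun z => by simp [sec]
  snd_eq := funext fun z => by simp [sec]
  iterate_add_eq := List.length_eq_zero_iff.mp (ht.1 [])
  pos := one_pos

theorem iterate_add_mul_eq (hv : OrbitVertex t u I P v) (j : ℕ) :
    t^[I + P * j] u = t^[I] u :=
  iterate_add_eq_of_le_of_dvd hv.iterate_add_eq le_rfl (Nat.dvd_mul_right P j)

theorem sec_iterate_mul (ht : IsEnd t) (hv : OrbitVertex t u I P v) (j : ℕ) :
    sec t^[P * j] (t^[I] u) = v.2^[j] := by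
  have hfix : t^[P] (t^[I] u) = t^[I] u := by
    rw [← Function.iterate_add_apply, add_comm, hv.iterate_add_eq]
  rw [Function.iterate_mul, (ht.iterate P).sec_iterate_of_isFixedPt hfix, hv.snd_eq]

theorem sec_iterate (ht : IsEnd t) (hv : OrbitVertex t u I P v) (j : ℕ) :
    sec t^[I + P * j] u = v.2^[j] ∘ v.1 := by
  rw [add_comm, Function.iterate_add, (ht.iterate I).sec_comp, hv.sec_iterate_mul ht, hv.fst_eq]

theorem iterate_append (ht : IsEnd t) (hv : OrbitVertex t u I P v) (j : ℕ) (w : List A) :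
    t^[I + P * j] (u ++ w) = t^[I] u ++ v.2^[j] (v.1 w) := by
  rw [(ht.iterate _).append_eq, hv.iterate_add_mul_eq, hv.sec_iterate ht, Function.comp_apply]

theorem iterate_append_eq_iff (ht : IsEnd t) (hv : OrbitVertex t u I P v) (i j : ℕ)
    (w : List A) :
    t^[I + P * i] (u ++ w) = t^[I + P * j] (u ++ w) ↔ v.2^[i] (v.1 w) = v.2^[j] (v.1 w) := by
  rw [hv.iterate_append ht, hv.iterate_append ht, List.append_cancel_left_eq]

theorem step (ht : IsEnd t) (hv : OrbitVertex t u I P v) (hs : OSStep v x m ℓ v') :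
    OrbitVertex t (u ++ [x]) (I + P * m) (P * ℓ) v' := by
  obtain ⟨hℓ, hper, -, -, rfl⟩ := hs
  refine ⟨?_, ?_, ?_, Nat.mul_pos hv.pos hℓ⟩
  · rw [sec_append, hv.sec_iterate ht]
  · rw [hv.iterate_append ht, sec_append, hv.sec_iterate_mul ht]
    rfl
  · rw [add_assoc, ← mul_add, (hv.iterate_append_eq_iff ht _ _ _).mpr hper]

theorem exists_step [Finite A] (ht : IsEnd t) (hv : OrbitVertex t u I P v) (x : A) :
    ∃ m ℓ v', OSStep v x m ℓ v' := by
  obtain ⟨a, c, hc, hac⟩ := ht.exists_iterate_add_eq (u ++ [x])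
  have hperiodic : v.2^[a + c] (v.1 [x]) = v.2^[a] (v.1 [x]) := by
    rw [← hv.iterate_append_eq_iff ht, mul_add, ← add_assoc]
    exact iterate_add_eq_of_le_of_dvd hac (by nlinarith [hv.pos]) (Nat.dvd_mul_left c P)
  obtain ⟨m, ℓ, hℓ, hper, hmin_m, hmin_ℓ⟩ := exists_minimal_iterate_add_eq ⟨a, c, hc, hperiodic⟩
  exact ⟨m, ℓ, _, hℓ, hper, hmin_m, hmin_ℓ, rfl⟩

theorem idx_eq_zero (ht : IsEnd t) (hv : OrbitVertex t u I P v) (hs : OSStep v x m ℓ v')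
    {a c : ℕ} (hc : 0 < c) (hac : t^[a + c] = t^[a]) (ha : a ≤ I) : m = 0 := by
  have hperiodic : v.2^[0 + c] (v.1 [x]) = v.2^[0] (v.1 [x]) := by
    rw [← hv.iterate_append_eq_iff ht, zero_add, mul_zero, add_zero]
    exact iterate_add_eq_of_le_of_dvd (congrFun hac _) ha (Nat.dvd_mul_left c P)
  exact Nat.le_zero.mp (hs.2.2.1 0 c hc hperiodic)

theorem mul_per_dvd (ht : IsEnd t) (hv : OrbitVertex t u I P v) (hs : OSStep v x m ℓ v')
    {a c : ℕ} (hac : t^[a + c] = t^[a]) (hP : P ∣ c) : P * ℓ ∣ c := by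
  obtain ⟨q, rfl⟩ := hP
  refine Nat.mul_dvd_mul_left P (dvd_of_iterate_add_eq hs.1 hs.2.1 hs.2.2.2.1
    (Nat.le_add_right m a) ?_)
  rw [← hv.iterate_append_eq_iff ht, mul_add, ← add_assoc]
  exact iterate_add_eq_of_le_of_dvd (congrFun hac _) (by nlinarith [hv.pos]) dvd_rfl

end OrbitVertex

section Glue

variable {β : Type*} {n k : ℕ} {f g : ℕ → β}

def glue (n : ℕ) (f g : ℕ → β) : ℕ → β := fun k => if k < n then f k else g (k - n)

@[simp] theorem glue_of_lt (h : k < n) : glue n f g k = f k := if_pos h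

@[simp] theorem glue_add : glue n f g (n + k) = g k := by
  simp [glue]

end Glue

@[to_additive]
theorem prod_range_comp_mod {M : Type*} [CommMonoid M] (f : ℕ → M) (n K : ℕ) :
    ∏ k ∈ Finset.range (n * K), f (k % n) = (∏ k ∈ Finset.range n, f k) ^ K := by
  induction K with
  | zero => simp
  | succ K ih =>
    rw [Nat.mul_succ, Finset.prod_range_add, ih, pow_succ]
    congr 1
    refine Finset.prod_congr rfl fun k hk => ?_
    rw [Nat.mul_add_mod, Nat.mod_eq_of_lt (Finset.mem_range.mp hk)]

/-- A walk in `Φ` indexed by `ℕ`; a walk of length `n` only uses its first `n` steps. -/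
structure Trail (A : Type*) where
  vert : ℕ → Vertex A
  lett : ℕ → A
  idx : ℕ → ℕ
  per : ℕ → ℕ

namespace Trail

open Finset

def IsWalk (w : Trail A) (n : ℕ) : Prop :=
  ∀ k < n, OSStep (w.vert k) (w.lett k) (w.idx k) (w.per k) (w.vert (k + 1))

def word (w : Trail A) (n : ℕ) : List A := (List.range n).map w.lett

def perProd (w : Trail A) (n : ℕ) : ℕ := ∏ k ∈ range n, w.per k

/-- The cost `i⁺` of the first `n` steps. -/
def index (w : Trail A) (n : ℕ) : ℕ := ∑ k ∈ range n, w.perProd k * w.idx k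

def numIdxNeZero (w : Trail A) (n : ℕ) : ℕ := ∑ k ∈ range n, if w.idx k = 0 then 0 else 1

def IsBadStep (w : Trail A) (k : ℕ) : Prop := w.idx k ≠ 0 ∨ w.per k ≠ 1

instance (w : Trail A) : DecidablePred w.IsBadStep :=
  fun k => inferInstanceAs (Decidable (w.idx k ≠ 0 ∨ w.per k ≠ 1))

def shift (w : Trail A) (i : ℕ) : Trail A :=
  ⟨fun k => w.vert (i + k), fun k => w.lett (i + k), fun k => w.idx (i + k),
    fun k => w.per (i + k)⟩

def append (w w' : Trail A) (n : ℕ) : Trail A :=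
  ⟨glue n w.vert w'.vert, glue n w.lett w'.lett, glue n w.idx w'.idx, glue n w.per w'.per⟩

def cycle (w : Trail A) (n : ℕ) : Trail A :=
  ⟨fun k => w.vert (k % n), fun k => w.lett (k % n), fun k => w.idx (k % n),
    fun k => w.per (k % n)⟩

def edge (v : Vertex A) (x : A) (m ℓ : ℕ) (v' : Vertex A) : Trail A :=
  ⟨fun k => if k = 0 then v else v', fun _ => x, fun _ => m, fun _ => ℓ⟩

variable {w w' : Trail A} {n n' k i : ℕ}

theorem perProd_succ (w : Trail A) (n : ℕ) : w.perProd (n + 1) = w.perProd n * w.per n :=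
  prod_range_succ _ _

theorem index_succ (w : Trail A) (n : ℕ) :
    w.index (n + 1) = w.index n + w.perProd n * w.idx n :=
  sum_range_succ _ _

theorem numIdxNeZero_succ (w : Trail A) (n : ℕ) :
    w.numIdxNeZero (n + 1) = w.numIdxNeZero n + if w.idx n = 0 then 0 else 1 :=
  sum_range_succ _ _

theorem word_succ (w : Trail A) (n : ℕ) : w.word (n + 1) = w.word n ++ [w.lett n] := by
  simp [word, List.range_succ]

theorem append_vert_of_le (hj : w'.vert 0 = w.vert n) (hk : k ≤ n) :
    (w.append w' n).vert k = w.vert k := by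
  show glue n w.vert w'.vert k = w.vert k
  rcases hk.lt_or_eq with hk | rfl
  · exact glue_of_lt hk
  · simpa using (glue_add (k := 0) (f := w.vert)).trans hj

theorem IsWalk.mono (hw : w.IsWalk n) (hk : k ≤ n) : w.IsWalk k :=
  fun j hj => hw j (hj.trans_le hk)

theorem IsWalk.shift (hw : w.IsWalk (i + n)) : (w.shift i).IsWalk n :=
  fun k hk => hw (i + k) (by omega)

theorem IsWalk.append (hw : w.IsWalk n) (hw' : w'.IsWalk n') (hj : w'.vert 0 = w.vert n) :
    (w.append w' n).IsWalk (n + n') := by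
  intro k hk
  rcases lt_or_ge k n with hkn | hkn
  · rw [append_vert_of_le hj hkn.le, append_vert_of_le hj hkn]
    simpa only [Trail.append, glue_of_lt hkn] using hw k hkn
  · obtain ⟨j, rfl⟩ := Nat.exists_eq_add_of_le hkn
    simpa only [Trail.append, add_assoc, glue_add] using hw' j (by omega)

theorem IsWalk.cycle (hw : w.IsWalk n) (hcl : w.vert n = w.vert 0) (hn : 0 < n) (N : ℕ) :
    (w.cycle n).IsWalk N := by
  intro k _
  have hnext : w.vert (k % n + 1) = w.vert ((k + 1) % n) := by
    rw [← Nat.mod_add_mod]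
    rcases Nat.lt_or_eq_of_le (Nat.mod_lt k hn) with h | h
    · rw [Nat.mod_eq_of_lt h]
    · rw [show k % n + 1 = n from h, Nat.mod_self, hcl]
  simpa only [Trail.cycle, hnext] using hw (k % n) (Nat.mod_lt k hn)

theorem IsWalk.orbitVertex {t : List A → List A} {u : List A} {I P : ℕ} (ht : IsEnd t)
    (hv : OrbitVertex t u I P (w.vert 0)) :
    ∀ {n}, w.IsWalk n →
      OrbitVertex t (u ++ w.word n) (I + P * w.index n) (P * w.perProd n) (w.vert n)
  | 0, _ => by simpa [word, index, perProd] using hv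
  | n + 1, hw => by
    have := ((hw.mono n.le_succ).orbitVertex ht hv).step ht (hw n n.lt_succ_self)
    rwa [word_succ, index_succ, perProd_succ, ← List.append_assoc, mul_add, ← add_assoc,
      ← mul_assoc, ← mul_assoc]

theorem cycle_vert_zero (w : Trail A) (n : ℕ) : (w.cycle n).vert 0 = w.vert 0 := by
  simp [Trail.cycle]

theorem perProd_cycle (w : Trail A) (n K : ℕ) :
    (w.cycle n).perProd (n * K) = w.perProd n ^ K :=
  prod_range_comp_mod w.per n K

theorem numIdxNeZero_cycle (w : Trail A) (n K : ℕ) : (w.cycle n).numIdxNeZero (n * K) = K * w.numIdxNeZero n :=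
  sum_range_comp_mod (fun k => if w.idx k = 0 then 0 else 1) n K

def toOSPath (w : Trail A) (hw : w.IsWalk n) : OSPath A n :=
  ⟨fun k => w.vert k, fun k => w.lett k, fun k => w.idx k, fun k => w.per k,
    fun k => hw k k.isLt⟩

theorem pCost_toOSPath (hw : w.IsWalk n) : pCost (w.toOSPath hw).per = w.perProd n :=
  Fin.prod_univ_eq_prod_range w.per n

end Trail

theorem iminusCost_pos_iff {n : ℕ} {idx per : Fin n → ℕ} :
    0 < iminusCost idx per ↔ ∃ k, idx k ≠ 0 := by
  simp only [iminusCost, Finset.sum_pos_iff, Finset.mem_univ, true_and]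
  refine exists_congr fun k => ?_
  split_ifs <;> simp_all

namespace OSPath

variable [Nonempty A] {n : ℕ}

noncomputable def toTrail (p : OSPath A n) : Trail A where
  vert k := p.vert ⟨min k n, by omega⟩
  lett k := if h : k < n then p.lett ⟨k, h⟩ else Classical.arbitrary A
  idx k := if h : k < n then p.idx ⟨k, h⟩ else 0
  per k := if h : k < n then p.per ⟨k, h⟩ else 1

theorem toTrail_vert (p : OSPath A n) (k : Fin (n + 1)) : p.toTrail.vert k = p.vert k := by
  simp [toTrail, min_eq_left (Nat.lt_succ_iff.mp k.isLt)]

theorem toTrail_idx (p : OSPath A n) (k : Fin n) : p.toTrail.idx k = p.idx k := by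
  simp [toTrail]

theorem toTrail_isWalk (p : OSPath A n) : p.toTrail.IsWalk n := by
  intro k hk
  have := p.step ⟨k, hk⟩
  rw [← toTrail_vert, ← toTrail_vert] at this
  simpa [toTrail, hk] using this

theorem numIdxNeZero_toTrail_pos (p : OSPath A n) (h : 0 < iminusCost p.idx p.per) :
    0 < p.toTrail.numIdxNeZero n := by
  obtain ⟨k, hk⟩ := iminusCost_pos_iff.mp h
  refine Finset.sum_pos_iff.mpr ⟨k, Finset.mem_range.mpr k.isLt, ?_⟩
  simp [toTrail_idx, hk]

theorem pCost_eq_perProd (p : OSPath A n) : pCost p.per = p.toTrail.perProd n := by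
  rw [Trail.perProd, ← Fin.prod_univ_eq_prod_range]
  simp [pCost, toTrail]

end OSPath

theorem osReach_root {t : List A → List A} : OSReach t (id, t) :=
  ⟨0, ⟨fun _ => (id, t), Fin.elim0, Fin.elim0, Fin.elim0, fun k => k.elim0⟩, rfl, rfl⟩

section Reach

variable [Nonempty A] {t : List A → List A} {v : Vertex A}

theorem osReach_iff :
    OSReach t v ↔ ∃ (w : Trail A) (n : ℕ), w.vert 0 = (id, t) ∧ w.IsWalk n ∧ w.vert n = v := by
  constructor
  · rintro ⟨n, p, hp, rfl⟩
    refine ⟨p.toTrail, n, ?_, p.toTrail_isWalk, p.toTrail_vert (Fin.last n)⟩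
    simpa using p.toTrail_vert 0 |>.trans hp
  · rintro ⟨w, n, h0, hw, rfl⟩
    exact ⟨n, w.toOSPath hw, by simpa [IsWalkFrom, Trail.toOSPath] using h0, by
      simp [Trail.toOSPath]⟩

theorem Trail.IsWalk.osReach {w : Trail A} {n k : ℕ} (h0 : OSReach t (w.vert 0))
    (hw : w.IsWalk n) (hk : k ≤ n) : OSReach t (w.vert k) := by
  obtain ⟨r, n₀, hr0, hr, hrn⟩ := osReach_iff.mp h0
  refine osReach_iff.mpr ⟨r.append w n₀, n₀ + k, ?_, hr.append (hw.mono hk) hrn.symm, ?_⟩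
  · rwa [Trail.append_vert_of_le hrn.symm (Nat.zero_le _)]
  · simp [Trail.append]

end Reach

def HasBadCycle (t : List A → List A) : Prop :=
  ∃ (n : ℕ) (w : OSPath A n), IsSimpleCycle t w ∧ (0 < iminusCost w.idx w.per ∨ 1 < pCost w.per)

namespace Trail

variable {t : List A → List A} {w : Trail A} {n b : ℕ}

theorem IsWalk.one_lt_perProd (hw : w.IsWalk n) (hb : b < n) (h : w.per b ≠ 1) :
    1 < w.perProd n :=
  lt_of_lt_of_le (lt_of_le_of_ne (hw b hb).1 h.symm)
    (Finset.single_le_prod' (fun k hk => (hw k (Finset.mem_range.mp hk)).1)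
      (Finset.mem_range.mpr hb))

theorem IsWalk.hasBadCycle_of_simple (hw : w.IsWalk n) (h0 : OSReach t (w.vert 0))
    (hcl : w.vert n = w.vert 0) (hinj : ∀ i j, i < j → j < n → w.vert i ≠ w.vert j)
    (hb : b < n) (hbad : w.IsBadStep b) : HasBadCycle t := by
  refine ⟨n, w.toOSPath hw, ⟨by omega, h0, hcl, fun i j hi hj hij => ?_⟩, ?_⟩
  · by_contra hne
    rcases lt_or_gt_of_ne (Fin.val_ne_of_ne hne) with h | h
    exacts [hinj i j h hj hij, hinj j i h hi hij.symm]
  · rcases hbad with h | h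
    · exact Or.inl (iminusCost_pos_iff.mpr ⟨⟨b, hb⟩, h⟩)
    · exact Or.inr ((pCost_toOSPath hw).symm ▸ hw.one_lt_perProd hb h)

theorem IsWalk.hasBadCycle [Nonempty A] (hw : w.IsWalk n) (h0 : OSReach t (w.vert 0))
    (hcl : w.vert n = w.vert 0) (hb : b < n) (hbad : w.IsBadStep b) : HasBadCycle t := by
  induction n using Nat.strong_induction_on generalizing w b with
  | _ n ih =>
  -- Cut the closed walk at a repeated vertex into an inner and an outer closed walk, both
  -- shorter; the bad step lies on one of them.
  by_cases hrep : ∃ i j, i < j ∧ j < n ∧ w.vert i = w.vert j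
  swap
  · push Not at hrep
    exact hw.hasBadCycle_of_simple h0 hcl hrep hb hbad
  obtain ⟨i, j, hij, hjn, hv⟩ := hrep
  by_cases hinner : i ≤ b ∧ b < j
  · have hw' : (w.shift i).IsWalk (j - i) := (hw.mono (by omega : i + (j - i) ≤ n)).shift
    have h0' : OSReach t (w.vert i) := hw.osReach h0 (by omega)
    refine ih (j - i) (by omega) hw' h0' ?_ (b := b - i) (by omega) ?_
    · simp only [Trail.shift, Nat.add_sub_cancel' hij.le, add_zero, hv]
    · simpa only [IsBadStep, Trail.shift, Nat.add_sub_cancel' hinner.1] using hbad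
  · have hjunction : (w.shift j).vert 0 = w.vert i := hv.symm
    have hw' : (w.append (w.shift j) i).IsWalk (i + (n - j)) :=
      (hw.mono (by omega)).append (hw.mono (by omega : j + (n - j) ≤ n)).shift hjunction
    have h0' : (w.append (w.shift j) i).vert 0 = w.vert 0 :=
      append_vert_of_le hjunction (Nat.zero_le i)
    refine ih (i + (n - j)) (by omega) hw' (h0'.symm ▸ h0) ?_
      (b := if b < i then b else i + (b - j)) (by split_ifs <;> omega) ?_
    · rw [h0', ← hcl]
      simp [Trail.append, Trail.shift, Nat.add_sub_cancel' hjn.le]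
    · split_ifs with hbi
      · simpa [IsBadStep, Trail.append, hbi] using hbad
      · simpa [IsBadStep, Trail.append, Trail.shift, Nat.add_sub_cancel' (by omega : j ≤ b)]
          using hbad

end Trail

section Infinite

variable {t : List A → List A} {a c : ℕ} {w : Trail A} {u : List A} {I P : ℕ}

theorem Trail.IsWalk.mul_perProd_dvd (ht : IsEnd t) (hac : t^[a + c] = t^[a])
    (hv : OrbitVertex t u I P (w.vert 0)) (hP : P ∣ c) :
    ∀ {n}, w.IsWalk n → P * w.perProd n ∣ c
  | 0, _ => by simpa [Trail.perProd] using hP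
  | n + 1, hw => by
    rw [Trail.perProd_succ, ← mul_assoc]
    exact ((hw.mono n.le_succ).orbitVertex ht hv).mul_per_dvd ht (hw n n.lt_succ_self) hac
      ((hw.mono n.le_succ).mul_perProd_dvd ht hac hv hP)

theorem Trail.IsWalk.numIdxNeZero_le (ht : IsEnd t) (hc : 0 < c) (hac : t^[a + c] = t^[a])
    (hv : OrbitVertex t u I P (w.vert 0)) {n : ℕ} (hw : w.IsWalk n) : w.numIdxNeZero n ≤ a := by
  suffices ∀ n, w.IsWalk n → w.numIdxNeZero n ≤ I + P * w.index n ∧ w.numIdxNeZero n ≤ a from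
    (this n hw).2
  intro n hw
  induction n with
  | zero => simp [Trail.numIdxNeZero]
  | succ n ih =>
    obtain ⟨h₁, h₂⟩ := ih (hw.mono n.le_succ)
    have hvn := (hw.mono n.le_succ).orbitVertex ht hv
    rw [Trail.numIdxNeZero_succ, Trail.index_succ, mul_add, ← add_assoc, ← mul_assoc]
    split_ifs with h0
    · simp only [h0, mul_zero, add_zero]
      exact ⟨h₁, h₂⟩
    · have hlt : I + P * w.index n < a := by
        by_contra hge
        exact h0 (hvn.idx_eq_zero ht (hw n n.lt_succ_self) hc hac (by omega))
      have hpos : 0 < P * w.perProd n * w.idx n := Nat.mul_pos hvn.pos (Nat.pos_of_ne_zero h0)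
      omega

theorem OSReach.exists_orbitVertex_dvd [Nonempty A] (ht : IsEnd t) (hac : t^[a + c] = t^[a])
    {v : Vertex A} (h : OSReach t v) : ∃ u I P, OrbitVertex t u I P v ∧ P ∣ c := by
  obtain ⟨w, n, h0, hw, rfl⟩ := osReach_iff.mp h
  have hv : OrbitVertex t [] 0 1 (w.vert 0) := h0 ▸ OrbitVertex.root ht
  exact ⟨_, _, _, hw.orbitVertex ht hv, hw.mul_perProd_dvd ht hac hv (one_dvd c)⟩

theorem infinite_iterates_of_hasBadCycle [Finite A] (ht : IsEnd t) (h : HasBadCycle t) :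
    {f : List A → List A | ∃ n, 1 ≤ n ∧ f = t^[n]}.Infinite := by
  obtain ⟨n, p, ⟨hn, h0, hcl, -⟩, hbad⟩ := h
  have : Nonempty A := ⟨p.lett ⟨0, hn⟩⟩
  intro hfin
  obtain ⟨a, c, hc, hac⟩ := exists_iterate_add_eq_of_finite hfin
  obtain ⟨u, I, P, hv, hP⟩ := h0.exists_orbitVertex_dvd ht hac
  have hw : ∀ N, (p.toTrail.cycle n).IsWalk N := by
    refine p.toTrail_isWalk.cycle ?_ hn
    simpa using (p.toTrail_vert (Fin.last n)).trans (hcl.trans (p.toTrail_vert 0).symm)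
  have hv' : OrbitVertex t u I P ((p.toTrail.cycle n).vert 0) := by
    simpa [Trail.cycle_vert_zero] using (p.toTrail_vert 0).symm ▸ hv
  rcases hbad with hidx | hper
  · have := (hw (n * (a + 1))).numIdxNeZero_le ht hc hac hv'
    rw [Trail.numIdxNeZero_cycle] at this
    nlinarith [p.numIdxNeZero_toTrail_pos hidx]
  · have hdvd := (hw (n * c)).mul_perProd_dvd ht hac hv' hP
    rw [Trail.perProd_cycle, ← p.pCost_eq_perProd] at hdvd
    have : 2 ^ c ≤ c := calc
      2 ^ c ≤ pCost p.per ^ c := Nat.pow_le_pow_left hper c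
      _ ≤ P * pCost p.per ^ c := Nat.le_mul_of_pos_left _ hv.pos
      _ ≤ c := Nat.le_of_dvd hc hdvd
    exact absurd this (Nat.lt_two_pow_self).not_ge

end Infinite

section Finite

variable {t : List A → List A}

theorem OSStep.label_eq {v v' v'' : Vertex A} {x : A} {m ℓ m' ℓ' : ℕ}
    (hs : OSStep v x m ℓ v') (hs' : OSStep v x m' ℓ' v'') : m = m' ∧ ℓ = ℓ' := by
  obtain rfl : m = m' := le_antisymm (hs.2.2.1 m' ℓ' hs'.1 hs'.2.1) (hs'.2.2.1 m ℓ hs.1 hs.2.1)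
  exact ⟨rfl, le_antisymm (hs.2.2.2.1 ℓ' hs'.1 hs'.2.1) (hs'.2.2.2.1 ℓ hs.1 hs.2.1)⟩

theorem exists_label_bound [Finite A] (hfin : {v | OSReach t v}.Finite) :
    ∃ M, 0 < M ∧ ∀ v x m ℓ v', OSReach t v → OSStep v x m ℓ v' → m ≤ M ∧ ℓ ≤ M := by
  have hlabels : (⋃ v ∈ {v | OSReach t v}, ⋃ x : A,
      {p : ℕ × ℕ | ∃ v', OSStep v x p.1 p.2 v'}).Finite :=
    hfin.biUnion fun v _ => Set.finite_iUnion fun x => Set.Subsingleton.finite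
      fun _ ⟨_, hp⟩ _ ⟨_, hq⟩ => Prod.ext_iff.mpr (hp.label_eq hq)
  obtain ⟨⟨M₁, M₂⟩, hM⟩ := hlabels.bddAbove
  refine ⟨max (max M₁ M₂) 1, by positivity, fun v x m ℓ v' hv hs => ?_⟩
  have := Prod.mk_le_mk.mp (hM (Set.mem_biUnion hv (Set.mem_iUnion.mpr ⟨x, v', hs⟩)))
  omega

namespace Trail

open Finset

variable {w : Trail A} {n : ℕ}

theorem perProd_le_pow {M : ℕ} (hM : ∀ k < n, w.per k ≤ M) :
    w.perProd n ≤ M ^ #{k ∈ range n | w.IsBadStep k} := by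
  rw [perProd, ← prod_filter_of_ne (p := w.IsBadStep) fun k _ h => Or.inr h]
  exact prod_le_pow_card _ _ _ fun k hk => hM k (mem_range.mp (mem_filter.mp hk).1)

theorem index_le {C : ℕ} (hC : ∀ k < n, w.perProd k * w.idx k ≤ C) :
    w.index n ≤ #{k ∈ range n | w.IsBadStep k} * C := by
  rw [index, ← sum_filter_of_ne (p := w.IsBadStep) fun k _ h => Or.inl (right_ne_zero_of_mul h)]
  exact sum_le_card_nsmul _ _ _ fun k hk => hC k (mem_range.mp (mem_filter.mp hk).1)

variable [Nonempty A]

theorem IsWalk.injOn_badSteps (hnb : ¬ HasBadCycle t) (h0 : OSReach t (w.vert 0))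
    (hw : w.IsWalk n) : Set.InjOn w.vert {k | k < n ∧ w.IsBadStep k} := by
  have hloop : ∀ i j, i < j → j < n → w.IsBadStep i → w.vert i ≠ w.vert j := by
    intro i j hij hj hbad heq
    have hi : OSReach t (w.vert i) := hw.osReach h0 (by omega)
    refine hnb ((hw.mono (by omega : i + (j - i) ≤ n)).shift.hasBadCycle hi ?_ (b := 0)
      (by omega) (by simpa [IsBadStep, Trail.shift] using hbad))
    simp [Trail.shift, Nat.add_sub_cancel' hij.le, heq]
  intro i ⟨hi, hbi⟩ j ⟨hj, hbj⟩ heq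
  rcases lt_trichotomy i j with h | h | h
  exacts [(hloop i j h hj hbi heq).elim, h, (hloop j i h hi hbj heq.symm).elim]

theorem IsWalk.card_badSteps_le (hfin : {v | OSReach t v}.Finite) (hnb : ¬ HasBadCycle t)
    (h0 : w.vert 0 = (id, t)) (hw : w.IsWalk n) :
    #{k ∈ range n | w.IsBadStep k} ≤ hfin.toFinset.card := by
  have hr : OSReach t (w.vert 0) := h0 ▸ osReach_root
  refine card_le_card_of_injOn w.vert (fun k hk => ?_) ?_
  · have hk := mem_range.mp (mem_filter.mp hk).1
    simpa using hw.osReach hr hk.le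
  · refine (hw.injOn_badSteps hnb hr).mono fun k hk => ?_
    simpa using hk

end Trail

theorem exists_walk_bound [Finite A] [Nonempty A] (hfin : {v | OSReach t v}.Finite)
    (hnb : ¬ HasBadCycle t) : ∃ B₁ B₂, ∀ (w : Trail A) n, w.vert 0 = (id, t) → w.IsWalk n →
      w.index n ≤ B₁ ∧ w.perProd n ≤ B₂ := by
  obtain ⟨M, hM, hlabel⟩ := exists_label_bound hfin
  set K := hfin.toFinset.card
  have hlabel' : ∀ (w : Trail A) n, w.vert 0 = (id, t) → w.IsWalk n →
      ∀ k < n, w.idx k ≤ M ∧ w.per k ≤ M := fun w n h0 hw k hk =>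
    hlabel _ _ _ _ _ (hw.osReach (h0 ▸ osReach_root) hk.le) (hw k hk)
  have hperProd : ∀ (w : Trail A) n, w.vert 0 = (id, t) → w.IsWalk n → w.perProd n ≤ M ^ K :=
    fun w n h0 hw => (Trail.perProd_le_pow fun k hk => (hlabel' w n h0 hw k hk).2).trans
      (Nat.pow_le_pow_right hM (hw.card_badSteps_le hfin hnb h0))
  refine ⟨K * (M ^ K * M), M ^ K, fun w n h0 hw => ⟨?_, hperProd w n h0 hw⟩⟩
  refine (Trail.index_le fun k hk => Nat.mul_le_mul (hperProd w k h0 (hw.mono hk.le))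
    (hlabel' w n h0 hw k hk).1).trans ?_
  exact Nat.mul_le_mul_right _ (hw.card_badSteps_le hfin hnb h0)

theorem exists_walk_word [Finite A] [Nonempty A] (ht : IsEnd t) (u : List A) :
    ∃ w : Trail A, w.vert 0 = (id, t) ∧ w.IsWalk u.length ∧ w.word u.length = u := by
  induction u using List.reverseRecOn with
  | nil => exact ⟨⟨fun _ => (id, t), fun _ => Classical.arbitrary A, fun _ => 0, fun _ => 0⟩,
      rfl, fun k hk => absurd hk (Nat.not_lt_zero k), rfl⟩
  | append_singleton u x ih =>
    obtain ⟨w, h0, hw, hu⟩ := ih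
    have hv := hw.orbitVertex ht (h0 ▸ OrbitVertex.root ht)
    obtain ⟨m, ℓ, v', hs⟩ := hv.exists_step ht x
    have hjunction : (Trail.edge (w.vert u.length) x m ℓ v').vert 0 = w.vert u.length := rfl
    refine ⟨w.append (Trail.edge (w.vert u.length) x m ℓ v') u.length, ?_, ?_, ?_⟩
    · rwa [Trail.append_vert_of_le hjunction (Nat.zero_le _)]
    · simpa using hw.append (fun k hk => by obtain rfl : k = 0 := (by omega); exact hs) hjunction
    · rw [List.length_append, List.length_singleton, Trail.word_succ, ← hu]
      simp [Trail.word, Trail.append, Trail.edge, glue, List.map_congr_left fun k hk =>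
        glue_of_lt (f := w.lett) (g := fun _ => x) (List.mem_range.mp hk)]

theorem finite_iterates_of_not_hasBadCycle [Finite A] [Nonempty A] (ht : IsEnd t)
    (hfin : {v | OSReach t v}.Finite) (hnb : ¬ HasBadCycle t) :
    {f : List A → List A | ∃ n, 1 ≤ n ∧ f = t^[n]}.Finite := by
  obtain ⟨B₁, B₂, hB⟩ := exists_walk_bound hfin hnb
  refine finite_iterates_of_iterate_add_eq (a := B₁) (Nat.factorial_pos B₂) (funext fun u => ?_)
  obtain ⟨w, h0, hw, hu⟩ := exists_walk_word ht u
  have hv := hw.orbitVertex ht (h0 ▸ OrbitVertex.root ht)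
  rw [List.nil_append, hu, zero_add, one_mul, one_mul] at hv
  obtain ⟨hI, hP⟩ := hB w _ h0 hw
  exact iterate_add_eq_of_le_of_dvd hv.iterate_add_eq hI (Nat.dvd_factorial hv.pos hP)

end Finite

theorem nonempty_of_iterates_infinite {t : List A → List A}
    (h : {f : List A → List A | ∃ n, 1 ≤ n ∧ f = t^[n]}.Infinite) : Nonempty A := by
  by_contra hA
  have : IsEmpty A := not_nonempty_iff.mp hA
  exact h Set.subsingleton_of_subsingleton.finite

/-- If the orbit signalizer graph `Φ(t)` has finitely many vertices, then the monogenic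
semigroup `{t^n : n ≥ 1}` is infinite iff `Φ(t)` contains a simple cycle `κ` with
`i⁻(κ) > 0` or `p(κ) > 1`. -/
theorem infinite_order_iff_bad_cycle {A : Type*} [Fintype A] (t : List A → List A)
    (ht : IsFEnd t) (hfin : {v | OSReach t v}.Finite) :
    {f : List A → List A | ∃ n : ℕ, 1 ≤ n ∧ f = t^[n]}.Infinite ↔
      ∃ (n : ℕ) (w : OSPath A n), IsSimpleCycle t w ∧
        (0 < iminusCost w.idx w.per ∨ 1 < pCost w.per) := by
  refine ⟨fun hinf => ?_, infinite_iterates_of_hasBadCycle ht.1⟩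
  have := nonempty_of_iterates_infinite hinf
  by_contra hnb
  exact hinf (finite_iterates_of_not_hasBadCycle ht.1 hfin hnb)

end AutHier
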